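/- Let G be a finite directed acyclic graph whose nodes are labeled by operations over keys K (with decidable equality) and values V, each operation being 'write k v' or 'read k'. Suppose G is valid: for every node v labeled 'read k' that G designates as reading from a node u labeled with a write to k, there is an edge (or path) from u to v, and every other node w labeled with a write to k satisfies: there is a path from w to u, or a path from v to w; and suppose additionally that the set of nodes writing any fixed key k is totally ordered by reachability in G. Then for any two topological orders of G (linear orders on the nodes in which u precedes v whenever G has an edge from u to v) and any initial store s₀ : K → V, executing the node operations in the two orders yields the same returned value at every read node and the same final store. -/

import Mathlib

/-- An operation over keys `K` and values `V`: `write k v` or `read k`. -/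
inductive Op (K : Type*) (V : Type*) where
  | write (k : K) (v : V)
  | read (k : K)

variable {K V : Type*} [DecidableEq K]

/-- One execution step: a write updates the store, a read leaves it unchanged. -/
def step (s : K → V) : Op K V → K → V
  | Op.write k v => Function.update s k v
  | Op.read _ => s

/-- The store obtained by executing a schedule left to right from `s₀`. -/
def execStore (s₀ : K → V) (S : List (Op K V)) : K → V := S.foldl step s₀

/-!
After executing a schedule, key `k` holds the value of the last write to `k` in it (or its
initial value if there is none). In a topological order the node `rf v` is the last writer of
`k` before a read `v` of `k`: by validity every other writer of `k` comes before `rf v` or after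
`v`. Since the writers of `k` form a chain under reachability, the last writer of `k` in any
topological order is the reachability-greatest one. In both cases the last writer does not
depend on the order.
-/

open Relation

section Execution

variable {k : K} {v : V}

theorem execStore_cons (s : K → V) (op : Op K V) (S : List (Op K V)) :
    execStore s (op :: S) = execStore (step s op) S := rfl

theorem execStore_append (s : K → V) (A B : List (Op K V)) :
    execStore s (A ++ B) = execStore (execStore s A) B :=
  List.foldl_append

theorem execStore_apply_of_forall_ne_write {S : List (Op K V)}
    (hS : ∀ op ∈ S, ∀ v, op ≠ .write k v) (s : K → V) : execStore s S k = s k := by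
  induction S generalizing s with
  | nil => rfl
  | cons op S ih =>
    rw [execStore_cons, ih (fun op' h => hS op' (List.mem_cons_of_mem _ h))]
    cases op with
    | write k' v =>
      have hk : k ≠ k' := by
        rintro rfl
        exact hS _ List.mem_cons_self v rfl
      exact Function.update_of_ne hk _ _
    | read _ => rfl

theorem execStore_append_write_apply (s : K → V) (A : List (Op K V)) {B : List (Op K V)}
    (hB : ∀ op ∈ B, ∀ v', op ≠ .write k v') : execStore s (A ++ .write k v :: B) k = v := by
  rw [execStore_append, execStore_cons, execStore_apply_of_forall_ne_write hB]
  exact Function.update_self _ _ _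

theorem execStore_apply_of_getElem_eq_write {S : List (Op K V)} {i : ℕ} (hi : i < S.length)
    (hSi : S[i] = .write k v)
    (hlater : ∀ (j : ℕ) (hj : j < S.length), i < j → ∀ v', S[j] ≠ .write k v')
    (s : K → V) : execStore s S k = v := by
  rw [← List.take_append_drop i S, List.drop_eq_getElem_cons hi, hSi]
  refine execStore_append_write_apply _ _ fun op hop v' hop_eq => ?_
  obtain ⟨j, hj, rfl⟩ := List.getElem_of_mem hop
  rw [List.getElem_drop] at hop_eq
  exact hlater _ _ (by omega) v' hop_eq

theorem execStore_take_ofFn_apply {n m : ℕ} (f : Fin n → Op K V) {i : Fin n}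
    (him : (i : ℕ) < m) (hfi : f i = .write k v)
    (hlater : ∀ j : Fin n, i < j → (j : ℕ) < m → ∀ v', f j ≠ .write k v')
    (s : K → V) : execStore s ((List.ofFn f).take m) k = v := by
  refine execStore_apply_of_getElem_eq_write (i := i) (by simp [him]) (by simpa using hfi)
    (fun j hj hij v' => ?_) s
  simp only [List.length_take, List.length_ofFn, lt_min_iff] at hj
  simpa using hlater ⟨j, hj.2⟩ hij hj.1 v'

end Execution

section TopologicalOrder

variable {N : Type*} {n : ℕ}

def IsTopologicalOrder (E : N → N → Prop) (e : Fin n ≃ N) : Prop :=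
  ∀ u v, E u v → e.symm u < e.symm v

variable {E : N → N → Prop} {e : Fin n ≃ N}

namespace IsTopologicalOrder

theorem lt_of_transGen (he : IsTopologicalOrder E e) {u v : N} (h : TransGen E u v) :
    e.symm u < e.symm v := by
  induction h with
  | single huv => exact he _ _ huv
  | tail _ hvw ih => exact ih.trans (he _ _ hvw)

theorem exists_forall_transGen_of_isChain (he : IsTopologicalOrder E e) {s : Set N}
    (hs : s.Nonempty) (hchain : IsChain (TransGen E) s) :
    ∃ u ∈ s, ∀ w ∈ s, w ≠ u → TransGen E w u := by
  have : Finite N := Finite.of_equiv _ e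
  obtain ⟨u, hu, hmax⟩ := s.exists_max_image e.symm s.toFinite hs
  refine ⟨u, hu, fun w hw hwu => (hchain hw hu hwu).resolve_right fun huw => ?_⟩
  exact (hmax w hw).not_gt (he.lt_of_transGen huw)

variable {k : K} {v : V}

theorem execStore_take_apply (he : IsTopologicalOrder E e) (lab : N → Op K V) {m : ℕ} {u : N}
    (hum : (e.symm u : ℕ) < m) (hu : lab u = .write k v)
    (hlast : ∀ w, w ≠ u → (∃ v', lab w = .write k v') → (e.symm w : ℕ) < m → TransGen E w u)
    (s : K → V) : execStore s ((List.ofFn (lab ∘ e)).take m) k = v := by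
  refine execStore_take_ofFn_apply _ hum (by simpa using hu) (fun j hj hjm v' hw => ?_) s
  have hne : e j ≠ u := by
    rintro rfl
    simp at hj
  have hlt := he.lt_of_transGen (hlast (e j) hne ⟨v', hw⟩ (by simpa using hjm))
  simp only [Equiv.symm_apply_apply] at hlt
  exact hj.not_gt hlt

theorem execStore_take_symm_apply (he : IsTopologicalOrder E e) (lab : N → Op K V) {u r : N}
    (hu : lab u = .write k v) (hur : TransGen E u r)
    (hvisible : ∀ w, w ≠ u → w ≠ r → (∃ v', lab w = .write k v') →
      TransGen E w u ∨ TransGen E r w)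
    (s : K → V) : execStore s ((List.ofFn (lab ∘ e)).take (e.symm r)) k = v := by
  refine he.execStore_take_apply lab (he.lt_of_transGen hur) hu (fun w hwu hw hwr => ?_) s
  have hwr' : w ≠ r := by
    rintro rfl
    exact lt_irrefl _ hwr
  exact (hvisible w hwu hwr' hw).resolve_right fun hrw => (he.lt_of_transGen hrw).not_gt hwr

theorem execStore_ofFn_apply (he : IsTopologicalOrder E e) (lab : N → Op K V) {u : N}
    (hu : lab u = .write k v)
    (hlast : ∀ w, w ≠ u → (∃ v', lab w = .write k v') → TransGen E w u)
    (s : K → V) : execStore s (List.ofFn (lab ∘ e)) k = v := by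
  rw [← List.take_of_length_le (List.length_ofFn (f := lab ∘ e)).le]
  exact he.execStore_take_apply lab (e.symm u).isLt hu (fun w hwu hw _ => hlast w hwu hw) s

end IsTopologicalOrder

end TopologicalOrder

theorem topological_orders_agree_general {N : Type*} [Fintype N]
    (E : N → N → Prop)
    (lab : N → Op K V) (rf : N → N)
    (hvalid : ∀ (v : N) (k : K), lab v = Op.read k →
      (∃ val, lab (rf v) = Op.write k val) ∧ Relation.TransGen E (rf v) v ∧
      ∀ w : N, w ≠ rf v → w ≠ v → (∃ val, lab w = Op.write k val) →
        Relation.TransGen E w (rf v) ∨ Relation.TransGen E v w)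
    (hwriters : ∀ (k : K) (w₁ w₂ : N),
      (∃ val, lab w₁ = Op.write k val) → (∃ val, lab w₂ = Op.write k val) →
      w₁ = w₂ ∨ Relation.TransGen E w₁ w₂ ∨ Relation.TransGen E w₂ w₁)
    (e₁ e₂ : Fin (Fintype.card N) ≃ N)
    (he₁ : ∀ u v : N, E u v → e₁.symm u < e₁.symm v)
    (he₂ : ∀ u v : N, E u v → e₂.symm u < e₂.symm v)
    (s₀ : K → V) :
    (∀ (v : N) (k : K), lab v = Op.read k →
      execStore s₀ ((List.ofFn (lab ∘ e₁)).take ((e₁.symm v : Fin (Fintype.card N)) : ℕ)) k =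
        execStore s₀ ((List.ofFn (lab ∘ e₂)).take ((e₂.symm v : Fin (Fintype.card N)) : ℕ)) k) ∧
    execStore s₀ (List.ofFn (lab ∘ e₁)) = execStore s₀ (List.ofFn (lab ∘ e₂)) := by
  have ht₁ : IsTopologicalOrder E e₁ := he₁
  have ht₂ : IsTopologicalOrder E e₂ := he₂
  refine ⟨fun v k hv => ?_, funext fun k => ?_⟩
  · obtain ⟨⟨val, hrf⟩, hpath, hvisible⟩ := hvalid v k hv
    rw [ht₁.execStore_take_symm_apply lab hrf hpath hvisible,
      ht₂.execStore_take_symm_apply lab hrf hpath hvisible]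
  · by_cases hk : ∃ w val, lab w = Op.write k val
    · have hchain : IsChain (Relation.TransGen E) {w | ∃ val, lab w = Op.write k val} :=
        fun w₁ hw₁ w₂ hw₂ hne => (hwriters k w₁ w₂ hw₁ hw₂).resolve_left hne
      obtain ⟨u, ⟨val, hu⟩, hlast⟩ := ht₁.exists_forall_transGen_of_isChain hk hchain
      rw [ht₁.execStore_ofFn_apply lab hu (fun w hwu hw => hlast w hw hwu),
        ht₂.execStore_ofFn_apply lab hu (fun w hwu hw => hlast w hw hwu)]
    · simp only [not_exists] at hk
      have hno : ∀ e : Fin (Fintype.card N) ≃ N, ∀ op ∈ List.ofFn (lab ∘ e), ∀ v,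
          op ≠ Op.write k v := by
        intro e op hop v
        obtain ⟨i, rfl⟩ := List.mem_ofFn.mp hop
        exact hk (e i) v
      rw [execStore_apply_of_forall_ne_write (hno e₁), execStore_apply_of_forall_ne_write (hno e₂)]

/-- Theorems 8.3 + 8.4: let `G` be a finite DAG with edge relation `E`, node
labels `lab` (operations), and reads-from designation `rf`.  If `G` is valid —
every read node `v` of key `k` reads from a write node `rf v` on `k` with a
path from `rf v` to `v`, and every other write node `w` on `k` has a path to
`rf v` or a path from `v`; and the write nodes of each key are totally ordered
by reachability — then any two topological orders of `G` (enumerations `e₁`,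
`e₂` in which sources of edges come first) yield, from any initial store, the
same value at every read node and the same final store. -/
theorem topological_orders_agree {N : Type*} [Fintype N] [DecidableEq N]
    (E : N → N → Prop) (hacyc : ∀ x : N, ¬ Relation.TransGen E x x)
    (lab : N → Op K V) (rf : N → N)
    (hvalid : ∀ (v : N) (k : K), lab v = Op.read k →
      (∃ val, lab (rf v) = Op.write k val) ∧ Relation.TransGen E (rf v) v ∧
      ∀ w : N, w ≠ rf v → w ≠ v → (∃ val, lab w = Op.write k val) →
        Relation.TransGen E w (rf v) ∨ Relation.TransGen E v w)
    (hwriters : ∀ (k : K) (w₁ w₂ : N),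
      (∃ val, lab w₁ = Op.write k val) → (∃ val, lab w₂ = Op.write k val) →
      w₁ = w₂ ∨ Relation.TransGen E w₁ w₂ ∨ Relation.TransGen E w₂ w₁)
    (e₁ e₂ : Fin (Fintype.card N) ≃ N)
    (he₁ : ∀ u v : N, E u v → e₁.symm u < e₁.symm v)
    (he₂ : ∀ u v : N, E u v → e₂.symm u < e₂.symm v)
    (s₀ : K → V) :
    (∀ (v : N) (k : K), lab v = Op.read k →
      execStore s₀ ((List.ofFn (lab ∘ e₁)).take ((e₁.symm v : Fin (Fintype.card N)) : ℕ)) k =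
        execStore s₀ ((List.ofFn (lab ∘ e₂)).take ((e₂.symm v : Fin (Fintype.card N)) : ℕ)) k) ∧
    execStore s₀ (List.ofFn (lab ∘ e₁)) = execStore s₀ (List.ofFn (lab ∘ e₂)) :=
  topological_orders_agree_general E lab rf hvalid hwriters e₁ e₂ he₁ he₂ s₀
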